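/- arXiv:1211.3135 — 5 statements merged into one kernel-verified Lean document; each statement's English description precedes it below -/
import Mathlib

section
/- Let (Ω, Σ, μ) be a measure space, A ∈ Σ with 0 < μ(A) < ∞, and let x, y : A → [0,∞) be integrable functions such that x(s)·y(s) = a for some constant a > 0 and all s ∈ A. Then μ(A) · ∫_A x·y dμ ≤ (∫_A x dμ) · (∫_A y dμ). -/
open MeasureTheory

/-! Since `x y = a` on `A`, `∫_A √(x y) = μ(A) √a`, and the claim is the Cauchy–Schwarz
inequality `(∫_A √x √y)² ≤ (∫_A x)(∫_A y)`, proved by integrating `0 ≤ (t √x - √y)²` and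
taking the discriminant of the resulting quadratic in `t`. -/

lemma two_mul_mul_sqrt_mul_le {x y : ℝ} (hx : 0 ≤ x) (hy : 0 ≤ y) (t : ℝ) :
    2 * t * √(x * y) ≤ t ^ 2 * x + y := by
  have hsq : 0 ≤ (t * √x - √y) ^ 2 := sq_nonneg _
  rw [Real.sqrt_mul hx]
  nlinarith [Real.sq_sqrt hx, Real.sq_sqrt hy]

lemma integrable_sqrt_mul {α : Type*} [MeasurableSpace α] {μ : Measure α} {x y : α → ℝ}
    (hx0 : 0 ≤ᵐ[μ] x) (hy0 : 0 ≤ᵐ[μ] y) (hx : Integrable x μ) (hy : Integrable y μ) :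
    Integrable (fun s ↦ √(x s * y s)) μ := by
  refine (hx.add hy).mono' ?_ ?_
  · exact Real.continuous_sqrt.comp_aestronglyMeasurable
      (hx.aestronglyMeasurable.mul hy.aestronglyMeasurable)
  · filter_upwards [hx0, hy0] with s hxs hys
    rw [Real.norm_of_nonneg (Real.sqrt_nonneg _), Pi.add_apply]
    have hamgm := two_mul_mul_sqrt_mul_le hxs hys 1
    nlinarith [Real.sqrt_nonneg (x s * y s)]

lemma sq_integral_sqrt_mul_le {α : Type*} [MeasurableSpace α] {μ : Measure α} {x y : α → ℝ}
    (hx0 : 0 ≤ᵐ[μ] x) (hy0 : 0 ≤ᵐ[μ] y) (hx : Integrable x μ) (hy : Integrable y μ) :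
    (∫ s, √(x s * y s) ∂μ) ^ 2 ≤ (∫ s, x s ∂μ) * ∫ s, y s ∂μ := by
  have hxy := integrable_sqrt_mul hx0 hy0 hx hy
  have hquad : ∀ t : ℝ, 0 ≤ (∫ s, x s ∂μ) * (t * t) + (-2 * ∫ s, √(x s * y s) ∂μ) * t
      + ∫ s, y s ∂μ := by
    intro t
    have hmono : ∫ s, 2 * t * √(x s * y s) ∂μ ≤ ∫ s, (t ^ 2 * x s + y s) ∂μ := by
      refine integral_mono_ae (hxy.const_mul _) ((hx.const_mul _).add hy) ?_
      filter_upwards [hx0, hy0] with s hxs hys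
      exact two_mul_mul_sqrt_mul_le hxs hys t
    rw [integral_const_mul, integral_add (hx.const_mul _) hy, integral_const_mul] at hmono
    linarith
  have hdiscrim := discrim_le_zero hquad
  rw [discrim] at hdiscrim
  linarith

theorem reverse_chebyshev_general {α : Type*} [MeasurableSpace α] (μ : Measure α)
    (A : Set α) (hA : MeasurableSet A)
    (x y : α → ℝ) (hx0 : ∀ s ∈ A, 0 ≤ x s) (hy0 : ∀ s ∈ A, 0 ≤ y s)
    (hxint : IntegrableOn x A μ) (hyint : IntegrableOn y A μ)
    (a : ℝ) (ha : 0 < a) (hxy : ∀ s ∈ A, x s * y s = a) :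
    (μ A).toReal * ∫ s in A, x s * y s ∂μ ≤ (∫ s in A, x s ∂μ) * ∫ s in A, y s ∂μ := by
  have hprod : ∫ s in A, x s * y s ∂μ = μ.real A * a := by
    rw [setIntegral_congr_fun hA hxy, setIntegral_const, smul_eq_mul]
  have hsqrt : ∫ s in A, √(x s * y s) ∂μ = μ.real A * √a := by
    rw [setIntegral_congr_fun hA fun s hs ↦ congrArg Real.sqrt (hxy s hs), setIntegral_const,
      smul_eq_mul]
  calc (μ A).toReal * ∫ s in A, x s * y s ∂μ = (∫ s in A, √(x s * y s) ∂μ) ^ 2 := by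
        rw [hprod, hsqrt, mul_pow, Real.sq_sqrt ha.le, measureReal_def]; ring
    _ ≤ (∫ s in A, x s ∂μ) * ∫ s in A, y s ∂μ :=
        sq_integral_sqrt_mul_le (ae_restrict_of_forall_mem hA hx0)
          (ae_restrict_of_forall_mem hA hy0) hxint hyint

/-- Reverse Chebyshev inequality: if x·y is a positive constant on a set A of finite
positive measure, then μ(A)·∫_A xy ≤ (∫_A x)(∫_A y). -/
theorem reverse_chebyshev {α : Type*} [MeasurableSpace α] (μ : Measure α)
    (A : Set α) (hA : MeasurableSet A) (hA0 : 0 < μ A) (hAfin : μ A < ⊤)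
    (x y : α → ℝ) (hx0 : ∀ s ∈ A, 0 ≤ x s) (hy0 : ∀ s ∈ A, 0 ≤ y s)
    (hxint : IntegrableOn x A μ) (hyint : IntegrableOn y A μ)
    (a : ℝ) (ha : 0 < a) (hxy : ∀ s ∈ A, x s * y s = a) :
    (μ A).toReal * ∫ s in A, x s * y s ∂μ ≤ (∫ s in A, x s ∂μ) * ∫ s in A, y s ∂μ :=
  reverse_chebyshev_general μ A hA x y hx0 hy0 hxint hyint a ha hxy
end

section
/- Let E, F be Banach ideal spaces and 1 < p < ∞ with conjugate exponent p′ (1/p + 1/p′ = 1). Then E^{(p)} ⊙ F^{(p′)} coincides isometrically with the Calderón space E^{1/p} F^{1-1/p}, i.e., inf{‖g‖_{E^{(p)}} ‖h‖_{F^{(p′)}} : |z| = gh, g, h ≥ 0} equals the Calderón norm inf{max(‖x‖_E, ‖y‖_F) : |z| ≤ x^{1/p} y^{1-1/p}, x ∈ E₊, y ∈ F₊}. -/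
open MeasureTheory

/-- A Banach ideal space on a measure space: a linear subspace of measurable
functions (mod null sets) with a complete lattice norm having the ideal property,
and a weak unit (saturation). -/
structure IdealSpace {α : Type*} [MeasurableSpace α] (μ : Measure α) where
  carrier : Set (α → ℝ)
  norm : (α → ℝ) → ℝ
  zero_mem : (0 : α → ℝ) ∈ carrier
  add_mem : ∀ {f g : α → ℝ}, f ∈ carrier → g ∈ carrier → f + g ∈ carrier
  smul_mem : ∀ (c : ℝ) {f : α → ℝ}, f ∈ carrier → c • f ∈ carrier
  norm_nonneg : ∀ f, 0 ≤ norm f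
  norm_eq_zero : ∀ f ∈ carrier, (norm f = 0 ↔ f =ᵐ[μ] 0)
  norm_add : ∀ f g, f ∈ carrier → g ∈ carrier → norm (f + g) ≤ norm f + norm g
  norm_smul : ∀ (c : ℝ) (f : α → ℝ), norm (c • f) = |c| * norm f
  ideal_mem : ∀ {f g : α → ℝ}, g ∈ carrier → (∀ᵐ a ∂μ, |f a| ≤ |g a|) → f ∈ carrier
  ideal_norm : ∀ {f g : α → ℝ}, g ∈ carrier → (∀ᵐ a ∂μ, |f a| ≤ |g a|) → norm f ≤ norm g
  weak_unit : ∃ w ∈ carrier, ∀ᵐ a ∂μ, 0 < w a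
  complete : ∀ x : ℕ → α → ℝ, (∀ n, x n ∈ carrier) →
    (∀ ε > 0, ∃ N, ∀ m ≥ N, ∀ n ≥ N, norm (x m - x n) < ε) →
    ∃ f ∈ carrier, Filter.Tendsto (fun n => norm (x n - f)) Filter.atTop (nhds 0)

variable {α : Type*} [MeasurableSpace α] {μ : Measure α}

/-- The pointwise product space E ⊙ F. -/
def prodSet (E F : IdealSpace μ) : Set (α → ℝ) :=
  {z | ∃ x ∈ E.carrier, ∃ y ∈ F.carrier, z =ᵐ[μ] x * y}

/-- The quasi-norm of the pointwise product space E ⊙ F. -/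
noncomputable def prodNorm (E F : IdealSpace μ) (z : α → ℝ) : ℝ :=
  sInf {r | ∃ x ∈ E.carrier, ∃ y ∈ F.carrier, z =ᵐ[μ] x * y ∧ r = E.norm x * F.norm y}

/-- The p-convexification E^{(p)}: membership. -/
def convSet (p : ℝ) (E : IdealSpace μ) : Set (α → ℝ) :=
  {x | (fun a => |x a| ^ p) ∈ E.carrier}

/-- The p-convexification norm ‖x‖ = ‖|x|^p‖_E^{1/p}. -/
noncomputable def convNorm (p : ℝ) (E : IdealSpace μ) (x : α → ℝ) : ℝ :=
  E.norm (fun a => |x a| ^ p) ^ (1 / p)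

lemma norm_zero' (E : IdealSpace μ) : E.norm 0 = 0 := by
  have h := E.norm_smul 0 (0 : α → ℝ)
  simpa using h

lemma factor (E F : IdealSpace μ) (p p' : ℝ) (hp : 1 < p) (hpp' : 1/p + 1/p' = 1)
    (z x y : α → ℝ) (hx : x ∈ E.carrier) (hy : y ∈ F.carrier)
    (hx0 : ∀ᵐ a ∂μ, 0 ≤ x a) (hy0 : ∀ᵐ a ∂μ, 0 ≤ y a)
    (hz : ∀ᵐ a ∂μ, |z a| ≤ x a ^ (1/p) * y a ^ (1 - 1/p)) :
    ∃ g h : α → ℝ, g ∈ convSet p E ∧ h ∈ convSet p' F ∧ (∀ᵐ a ∂μ, 0 ≤ g a) ∧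
      (∀ᵐ a ∂μ, 0 ≤ h a) ∧ (∀ᵐ a ∂μ, |z a| = g a * h a) ∧
      convNorm p E g ≤ E.norm x ^ (1/p) ∧ convNorm p' F h ≤ F.norm y ^ (1/p') := by
  classical
  have hp0 : 0 < p := lt_trans one_pos hp
  have hpne : p ≠ 0 := ne_of_gt hp0
  have hip : 0 < 1/p := by positivity
  have hip' : (1:ℝ) - 1/p = 1/p' := by linarith
  have hp'invpos : 0 < 1/p' := by
    rw [← hip']
    have : 1/p < 1 := by rw [div_lt_one hp0]; exact hp
    linarith
  have hp'0 : 0 < p' := one_div_pos.mp hp'invpos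
  have hp'ne : p' ≠ 0 := ne_of_gt hp'0
  set g : α → ℝ := fun a => |x a| ^ (1/p) with hg_def
  set h : α → ℝ := fun a => if g a = 0 then 0 else |z a| / g a with hh_def
  have hgnn : ∀ a, 0 ≤ g a := fun a => Real.rpow_nonneg (abs_nonneg _) _
  have hhnn : ∀ a, 0 ≤ h a := by
    intro a
    by_cases hga : g a = 0
    · simp [hh_def, hga]
    · simp only [hh_def, hga, if_false]
      exact div_nonneg (abs_nonneg _) (hgnn a)
  have hgp : ∀ a, |g a| ^ p = |x a| := by
    intro a
    rw [abs_of_nonneg (hgnn a), hg_def]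
    rw [← Real.rpow_mul (abs_nonneg (x a)), one_div_mul_cancel hpne, Real.rpow_one]
  have hgmem : g ∈ convSet p E := by
    show (fun a => |g a| ^ p) ∈ E.carrier
    simp only [hgp]
    exact E.ideal_mem hx (Filter.Eventually.of_forall fun a => by rw [abs_abs])
  have hhb : ∀ᵐ a ∂μ, |h a| ^ p' ≤ |y a| := by
    filter_upwards [hx0, hy0, hz] with a hxa hya hza
    by_cases hga : g a = 0
    · simp [hh_def, hga, Real.zero_rpow hp'ne, abs_nonneg]
    · have hgpos : 0 < g a := lt_of_le_of_ne (hgnn a) (Ne.symm hga)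
      have hha : h a = |z a| / g a := by simp [hh_def, hga]
      have hle : h a ≤ y a ^ (1 - 1/p) := by
        rw [hha, div_le_iff₀ hgpos]
        calc |z a| ≤ x a ^ (1/p) * y a ^ (1 - 1/p) := hza
          _ = y a ^ (1 - 1/p) * g a := by
              rw [hg_def]; simp only []
              rw [abs_of_nonneg hxa, mul_comm]
      calc |h a| ^ p' = h a ^ p' := by rw [abs_of_nonneg (hhnn a)]
        _ ≤ (y a ^ (1 - 1/p)) ^ p' := Real.rpow_le_rpow (hhnn a) hle (le_of_lt hp'0)
        _ = y a := by
            rw [hip', ← Real.rpow_mul hya, one_div_mul_cancel hp'ne, Real.rpow_one]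
        _ = |y a| := (abs_of_nonneg hya).symm
  have hhabs : ∀ᵐ a ∂μ, |(|h a| ^ p')| ≤ |y a| := by
    filter_upwards [hhb] with a ha
    rwa [abs_of_nonneg (Real.rpow_nonneg (abs_nonneg _) _)]
  have hhmem : h ∈ convSet p' F := F.ideal_mem hy hhabs
  refine ⟨g, h, hgmem, hhmem, Filter.Eventually.of_forall hgnn,
    Filter.Eventually.of_forall hhnn, ?_, ?_, ?_⟩
  · filter_upwards [hx0, hz] with a hxa hza
    by_cases hga : g a = 0
    · have hx0' : x a ^ (1/p) = 0 := by
        rw [← abs_of_nonneg hxa]; exact hga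
      have : |z a| = 0 := le_antisymm (by rw [hx0', zero_mul] at hza; exact hza) (abs_nonneg _)
      simp [this, hga]
    · have hha : h a = |z a| / g a := by simp [hh_def, hga]
      rw [hha, mul_comm, div_mul_cancel₀ _ hga]
  · show E.norm (fun a => |g a| ^ p) ^ (1/p) ≤ E.norm x ^ (1/p)
    apply Real.rpow_le_rpow (E.norm_nonneg _) _ (le_of_lt hip)
    simp only [hgp]
    exact E.ideal_norm hx (Filter.Eventually.of_forall fun a => by rw [abs_abs])
  · show F.norm (fun a => |h a| ^ p') ^ (1/p') ≤ F.norm y ^ (1/p')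
    exact Real.rpow_le_rpow (F.norm_nonneg _) (F.ideal_norm hy hhabs) (le_of_lt hp'invpos)

lemma build_xy (E F : IdealSpace μ) (p p' : ℝ) (hp : 1 < p) (hpp' : 1/p + 1/p' = 1)
    (z g h : α → ℝ) (hg : g ∈ convSet p E) (hh : h ∈ convSet p' F)
    (hg0 : ∀ᵐ a ∂μ, 0 ≤ g a) (hh0 : ∀ᵐ a ∂μ, 0 ≤ h a)
    (hz : ∀ᵐ a ∂μ, |z a| = g a * h a) :
    ∃ x ∈ E.carrier, ∃ y ∈ F.carrier, (∀ᵐ a ∂μ, 0 ≤ x a) ∧ (∀ᵐ a ∂μ, 0 ≤ y a) ∧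
      (∀ᵐ a ∂μ, |z a| ≤ x a ^ (1/p) * y a ^ (1 - 1/p)) ∧
      max (E.norm x) (F.norm y) ≤ convNorm p E g * convNorm p' F h := by
  have hp0 : 0 < p := lt_trans one_pos hp
  have hpne : p ≠ 0 := ne_of_gt hp0
  have hip : 0 < 1/p := by positivity
  have hipne : (1:ℝ)/p ≠ 0 := ne_of_gt hip
  have hip' : (1:ℝ) - 1/p = 1/p' := by linarith
  have hp'invpos : 0 < 1/p' := by
    rw [← hip']
    have : 1/p < 1 := by rw [div_lt_one hp0]; exact hp
    linarith
  have hp'0 : 0 < p' := one_div_pos.mp hp'invpos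
  have hp'ne : p' ≠ 0 := ne_of_gt hp'0
  set N : ℝ := E.norm (fun a => |g a| ^ p) with hN_def
  set M : ℝ := F.norm (fun a => |h a| ^ p') with hM_def
  have hNnn : 0 ≤ N := E.norm_nonneg _
  have hMnn : 0 ≤ M := F.norm_nonneg _
  have hcd_nn : 0 ≤ convNorm p E g * convNorm p' F h :=
    mul_nonneg (Real.rpow_nonneg hNnn _) (Real.rpow_nonneg hMnn _)
  by_cases hdeg : N = 0 ∨ M = 0
  · -- degenerate case: z = 0 a.e.
    have hz0 : ∀ᵐ a ∂μ, z a = 0 := by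
      rcases hdeg with hN0 | hM0
      · have hgz : (fun a => |g a| ^ p) =ᵐ[μ] 0 := (E.norm_eq_zero _ hg).mp hN0
        filter_upwards [hz, hgz] with a hza hga
        have : |g a| ^ p = 0 := hga
        have hga0 : g a = 0 := by
          have := (Real.rpow_eq_zero (abs_nonneg _) hpne).mp this
          exact abs_eq_zero.mp this
        have : |z a| = 0 := by rw [hza, hga0, zero_mul]
        exact abs_eq_zero.mp this
      · have hhz : (fun a => |h a| ^ p') =ᵐ[μ] 0 := (F.norm_eq_zero _ hh).mp hM0
        filter_upwards [hz, hhz] with a hza hha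
        have hha0 : h a = 0 := by
          have := (Real.rpow_eq_zero (abs_nonneg _) hp'ne).mp hha
          exact abs_eq_zero.mp this
        have : |z a| = 0 := by rw [hza, hha0, mul_zero]
        exact abs_eq_zero.mp this
    refine ⟨0, E.zero_mem, 0, F.zero_mem, Filter.Eventually.of_forall (by simp),
      Filter.Eventually.of_forall (by simp), ?_, ?_⟩
    · filter_upwards [hz0] with a hza
      simp only [Pi.zero_apply, hza, abs_zero]
      exact mul_nonneg (Real.rpow_nonneg le_rfl _) (Real.rpow_nonneg le_rfl _)
    · rw [norm_zero', norm_zero', max_self]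
      exact hcd_nn
  · push_neg at hdeg
    obtain ⟨hN0, hM0⟩ := hdeg
    have hNpos : 0 < N := lt_of_le_of_ne hNnn (Ne.symm hN0)
    have hMpos : 0 < M := lt_of_le_of_ne hMnn (Ne.symm hM0)
    have hc_def : convNorm p E g = N ^ (1/p) := rfl
    have hd_def : convNorm p' F h = M ^ (1/p') := rfl
    set c : ℝ := N ^ (1/p) with hc
    set d : ℝ := M ^ (1/p') with hd
    have hcpos : 0 < c := Real.rpow_pos_of_pos hNpos _
    have hdpos : 0 < d := Real.rpow_pos_of_pos hMpos _
    have hcp : c ^ p = N := by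
      rw [hc, ← Real.rpow_mul hNnn, one_div_mul_cancel hpne, Real.rpow_one]
    have hdp : d ^ p' = M := by
      rw [hd, ← Real.rpow_mul hMnn, one_div_mul_cancel hp'ne, Real.rpow_one]
    set lam : ℝ := d * c ^ (1 - p) with hlam
    set mu : ℝ := c * d ^ (1 - p') with hmu
    have hlampos : 0 < lam := mul_pos hdpos (Real.rpow_pos_of_pos hcpos _)
    have hmupos : 0 < mu := mul_pos hcpos (Real.rpow_pos_of_pos hdpos _)
    have hppinv : p * (1/p) = 1 := mul_one_div_cancel hpne
    have hppinv' : p' * (1/p') = 1 := mul_one_div_cancel hp'ne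
    have hexp1 : (1 - p) * (1/p) + 1/p' = 0 := by
      rw [sub_mul, one_mul, hppinv]; linarith
    have hexp2 : 1/p + (1 - p') * (1/p') = 0 := by
      rw [sub_mul, one_mul, hppinv']; linarith
    have hK : lam ^ (1/p) * mu ^ (1/p') = 1 := by
      rw [hlam, hmu]
      rw [Real.mul_rpow hdpos.le (Real.rpow_nonneg hcpos.le _),
          Real.mul_rpow hcpos.le (Real.rpow_nonneg hdpos.le _),
          ← Real.rpow_mul hcpos.le, ← Real.rpow_mul hdpos.le]
      calc d ^ (1/p) * c ^ ((1-p) * (1/p)) * (c ^ (1/p') * d ^ ((1-p') * (1/p')))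
          = (c ^ ((1-p) * (1/p)) * c ^ (1/p')) * (d ^ (1/p) * d ^ ((1-p') * (1/p'))) := by ring
        _ = 1 := by
            rw [← Real.rpow_add hcpos, ← Real.rpow_add hdpos, hexp1, hexp2,
              Real.rpow_zero, Real.rpow_zero, mul_one]
    refine ⟨fun a => lam * |g a| ^ p, ?_, fun a => mu * |h a| ^ p', ?_, ?_, ?_, ?_, ?_⟩
    · have heq : (fun a => lam * |g a| ^ p) = lam • (fun a => |g a| ^ p) := rfl
      rw [heq]; exact E.smul_mem lam hg
    · have heq : (fun a => mu * |h a| ^ p') = mu • (fun a => |h a| ^ p') := rfl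
      rw [heq]; exact F.smul_mem mu hh
    · exact Filter.Eventually.of_forall fun a =>
        mul_nonneg hlampos.le (Real.rpow_nonneg (abs_nonneg _) _)
    · exact Filter.Eventually.of_forall fun a =>
        mul_nonneg hmupos.le (Real.rpow_nonneg (abs_nonneg _) _)
    · filter_upwards [hg0, hh0, hz] with a hga hha hza
      rw [hip']
      have h1 : (lam * |g a| ^ p) ^ (1/p) = lam ^ (1/p) * |g a| := by
        rw [Real.mul_rpow hlampos.le (Real.rpow_nonneg (abs_nonneg _) _),
          ← Real.rpow_mul (abs_nonneg _), mul_one_div_cancel hpne, Real.rpow_one]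
      have h2 : (mu * |h a| ^ p') ^ (1/p') = mu ^ (1/p') * |h a| := by
        rw [Real.mul_rpow hmupos.le (Real.rpow_nonneg (abs_nonneg _) _),
          ← Real.rpow_mul (abs_nonneg _), mul_one_div_cancel hp'ne, Real.rpow_one]
      rw [h1, h2]
      have : lam ^ (1/p) * |g a| * (mu ^ (1/p') * |h a|)
          = (lam ^ (1/p) * mu ^ (1/p')) * (|g a| * |h a|) := by ring
      rw [this, hK, one_mul, abs_of_nonneg hga, abs_of_nonneg hha]
      exact le_of_eq hza
    · have hnx : E.norm (fun a => lam * |g a| ^ p) = c * d := by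
        have heq : (fun a => lam * |g a| ^ p) = lam • (fun a => |g a| ^ p) := rfl
        rw [heq, E.norm_smul, abs_of_pos hlampos, ← hN_def, hlam]
        calc d * c ^ (1 - p) * N = d * (c ^ (1 - p) * c ^ p) := by rw [hcp]; ring
          _ = d * c := by rw [← Real.rpow_add hcpos, sub_add_cancel, Real.rpow_one]
          _ = c * d := mul_comm _ _
      have hny : F.norm (fun a => mu * |h a| ^ p') = c * d := by
        have heq : (fun a => mu * |h a| ^ p') = mu • (fun a => |h a| ^ p') := rfl
        rw [heq, F.norm_smul, abs_of_pos hmupos, ← hM_def, hmu]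
        calc c * d ^ (1 - p') * M = c * (d ^ (1 - p') * d ^ p') := by rw [hdp]; ring
          _ = c * d := by rw [← Real.rpow_add hdpos, sub_add_cancel, Real.rpow_one]
      rw [hnx, hny, max_self, hc_def, hd_def]

/-- Theorem 1(ii): E^{(p)} ⊙ F^{(p')} coincides isometrically with the Calderón space
E^{1/p}F^{1-1/p}: the sets coincide and the product norm equals the Calderón norm. -/
theorem conv_prod_eq_calderon (E F : IdealSpace μ) (p p' : ℝ)
    (hp : 1 < p) (hpp' : 1 / p + 1 / p' = 1) (z : α → ℝ) :
    ((∃ g ∈ convSet p E, ∃ h ∈ convSet p' F, (∀ᵐ a ∂μ, 0 ≤ g a) ∧ (∀ᵐ a ∂μ, 0 ≤ h a) ∧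
        ∀ᵐ a ∂μ, |z a| = g a * h a) ↔
      (∃ x ∈ E.carrier, ∃ y ∈ F.carrier, (∀ᵐ a ∂μ, 0 ≤ x a) ∧ (∀ᵐ a ∂μ, 0 ≤ y a) ∧
        ∀ᵐ a ∂μ, |z a| ≤ x a ^ (1 / p) * y a ^ (1 - 1 / p))) ∧
    sInf {r | ∃ g ∈ convSet p E, ∃ h ∈ convSet p' F, (∀ᵐ a ∂μ, 0 ≤ g a) ∧ (∀ᵐ a ∂μ, 0 ≤ h a) ∧
        (∀ᵐ a ∂μ, |z a| = g a * h a) ∧ r = convNorm p E g * convNorm p' F h} =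
      sInf {r | ∃ x ∈ E.carrier, ∃ y ∈ F.carrier, (∀ᵐ a ∂μ, 0 ≤ x a) ∧ (∀ᵐ a ∂μ, 0 ≤ y a) ∧
        (∀ᵐ a ∂μ, |z a| ≤ x a ^ (1 / p) * y a ^ (1 - 1 / p)) ∧
        r = max (E.norm x) (F.norm y)} := by
  have hp0 : 0 < p := lt_trans one_pos hp
  have hip : 0 < 1/p := by positivity
  have hip' : (1:ℝ) - 1/p = 1/p' := by linarith
  have hp'invpos : 0 < 1/p' := by
    rw [← hip']
    have : 1/p < 1 := by rw [div_lt_one hp0]; exact hp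
    linarith
  set A := {r | ∃ g ∈ convSet p E, ∃ h ∈ convSet p' F, (∀ᵐ a ∂μ, 0 ≤ g a) ∧
      (∀ᵐ a ∂μ, 0 ≤ h a) ∧ (∀ᵐ a ∂μ, |z a| = g a * h a) ∧
      r = convNorm p E g * convNorm p' F h} with hA_def
  set B := {r | ∃ x ∈ E.carrier, ∃ y ∈ F.carrier, (∀ᵐ a ∂μ, 0 ≤ x a) ∧ (∀ᵐ a ∂μ, 0 ≤ y a) ∧
      (∀ᵐ a ∂μ, |z a| ≤ x a ^ (1 / p) * y a ^ (1 - 1 / p)) ∧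
      r = max (E.norm x) (F.norm y)} with hB_def
  constructor
  · constructor
    · rintro ⟨g, hg, h, hh, hg0, hh0, hz⟩
      obtain ⟨x, hx, y, hy, hx0, hy0, hzle, -⟩ :=
        build_xy E F p p' hp hpp' z g h hg hh hg0 hh0 hz
      exact ⟨x, hx, y, hy, hx0, hy0, hzle⟩
    · rintro ⟨x, hx, y, hy, hx0, hy0, hz⟩
      obtain ⟨g, h, hg, hh, hg0, hh0, hzeq, -, -⟩ :=
        factor E F p p' hp hpp' z x y hx hy hx0 hy0 hz
      exact ⟨g, hg, h, hh, hg0, hh0, hzeq⟩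
  · have hAbdd : BddBelow A := by
      refine ⟨0, ?_⟩
      rintro r ⟨g, hg, h, hh, -, -, -, rfl⟩
      exact mul_nonneg (Real.rpow_nonneg (E.norm_nonneg _) _)
        (Real.rpow_nonneg (F.norm_nonneg _) _)
    have hBbdd : BddBelow B := by
      refine ⟨0, ?_⟩
      rintro r ⟨x, hx, y, hy, -, -, -, rfl⟩
      exact le_max_of_le_left (E.norm_nonneg x)
    have hAB : ∀ r ∈ A, sInf B ≤ r := by
      rintro r ⟨g, hg, h, hh, hg0, hh0, hzeq, rfl⟩
      obtain ⟨x, hx, y, hy, hx0, hy0, hzle, hmax⟩ :=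
        build_xy E F p p' hp hpp' z g h hg hh hg0 hh0 hzeq
      have hmem : max (E.norm x) (F.norm y) ∈ B := ⟨x, hx, y, hy, hx0, hy0, hzle, rfl⟩
      exact le_trans (csInf_le hBbdd hmem) hmax
    have hBA : ∀ r ∈ B, sInf A ≤ r := by
      rintro r ⟨x, hx, y, hy, hx0, hy0, hzle, rfl⟩
      obtain ⟨g, h, hg, hh, hg0, hh0, hzeq, hcg, hch⟩ :=
        factor E F p p' hp hpp' z x y hx hy hx0 hy0 hzle
      have hmem : convNorm p E g * convNorm p' F h ∈ A :=
        ⟨g, hg, h, hh, hg0, hh0, hzeq, rfl⟩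
      refine le_trans (csInf_le hAbdd hmem) ?_
      have hMnn : 0 ≤ max (E.norm x) (F.norm y) := le_max_of_le_left (E.norm_nonneg x)
      calc convNorm p E g * convNorm p' F h
          ≤ E.norm x ^ (1/p) * F.norm y ^ (1/p') :=
            mul_le_mul hcg hch (Real.rpow_nonneg (F.norm_nonneg _) _)
              (Real.rpow_nonneg (E.norm_nonneg _) _)
        _ ≤ max (E.norm x) (F.norm y) ^ (1/p) * max (E.norm x) (F.norm y) ^ (1/p') :=
            mul_le_mul
              (Real.rpow_le_rpow (E.norm_nonneg _) (le_max_left _ _) hip.le)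
              (Real.rpow_le_rpow (F.norm_nonneg _) (le_max_right _ _) hp'invpos.le)
              (Real.rpow_nonneg (F.norm_nonneg _) _) (Real.rpow_nonneg hMnn _)
        _ = max (E.norm x) (F.norm y) := by
            rw [← Real.rpow_add_of_nonneg hMnn hip.le hp'invpos.le, hpp', Real.rpow_one]
    rcases Set.eq_empty_or_nonempty A with hAe | hAne
    · have hBe : B = ∅ := by
        rw [Set.eq_empty_iff_forall_notMem] at hAe ⊢
        rintro r ⟨x, hx, y, hy, hx0, hy0, hzle, rfl⟩
        obtain ⟨g, h, hg, hh, hg0, hh0, hzeq, -, -⟩ :=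
          factor E F p p' hp hpp' z x y hx hy hx0 hy0 hzle
        exact hAe _ ⟨g, hg, h, hh, hg0, hh0, hzeq, rfl⟩
      rw [hAe, hBe]
    · have hBne : B.Nonempty := by
        obtain ⟨r, g, hg, h, hh, hg0, hh0, hzeq, -⟩ := hAne
        obtain ⟨x, hx, y, hy, hx0, hy0, hzle, -⟩ :=
          build_xy E F p p' hp hpp' z g h hg hh hg0 hh0 hzeq
        exact ⟨_, x, hx, y, hy, hx0, hy0, hzle, rfl⟩
      exact le_antisymm (le_csInf hBne hBA) (le_csInf hAne hAB)
end

section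
/- Let E, F be Banach ideal spaces and 0 < p < ∞. Then the p-convexification of the product space equals the product of the p-convexifications isometrically: (E ⊙ F)^{(p)} ≡ E^{(p)} ⊙ F^{(p)}. -/
open MeasureTheory

variable {α : Type*} [MeasurableSpace α] {μ : Measure α}

/-- Product of general normed sets of functions. -/
def prodSetG (μ : Measure α) (S T : Set (α → ℝ)) : Set (α → ℝ) :=
  {z | ∃ x ∈ S, ∃ y ∈ T, z =ᵐ[μ] x * y}

noncomputable def prodNormG (μ : Measure α) (S T : Set (α → ℝ))
    (NS NT : (α → ℝ) → ℝ) (z : α → ℝ) : ℝ :=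
  sInf {r | ∃ x ∈ S, ∃ y ∈ T, z =ᵐ[μ] x * y ∧ r = NS x * NT y}

lemma myAux_sign_mul_abs (x : ℝ) : Real.sign x * |x| = x := by
  rcases lt_trichotomy x 0 with h | h | h
  · rw [Real.sign_of_neg h, abs_of_neg h]; ring
  · simp [h]
  · rw [Real.sign_of_pos h, abs_of_pos h]; ring

lemma myAux_abs_sign_le_one (x : ℝ) : |Real.sign x| ≤ 1 := by
  rcases Real.sign_apply_eq x with h | h | h <;> rw [h] <;> norm_num

lemma myAux_rpow_inv_p {p : ℝ} (hp : 0 < p) {s : ℝ} (hs : 0 ≤ s) :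
    (s ^ (1 / p)) ^ p = s := by
  rw [← Real.rpow_mul hs, one_div_mul_cancel hp.ne', Real.rpow_one]

lemma myAux_rpow_p_inv {p : ℝ} (hp : 0 < p) {s : ℝ} (hs : 0 ≤ s) :
    (s ^ p) ^ (1 / p) = s := by
  rw [← Real.rpow_mul hs, mul_one_div_cancel hp.ne', Real.rpow_one]

lemma myAux_fwd {α : Type*} [MeasurableSpace α] {μ : Measure α}
    (E F : IdealSpace μ) {p : ℝ} (hp : 0 < p) (z x y : α → ℝ)
    (hx : x ∈ E.carrier) (hy : y ∈ F.carrier)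
    (h : (fun a => |z a| ^ p) =ᵐ[μ] x * y) :
    ∃ u v : α → ℝ, (fun a => |u a| ^ p) ∈ E.carrier ∧ (fun a => |v a| ^ p) ∈ F.carrier ∧
      E.norm (fun a => |u a| ^ p) ≤ E.norm x ∧ F.norm (fun a => |v a| ^ p) ≤ F.norm y ∧
      z =ᵐ[μ] u * v := by
  set u : α → ℝ := fun a => Real.sign (z a) * |x a| ^ (1 / p) with hu
  set v : α → ℝ := fun a => |y a| ^ (1 / p) with hv
  have hule : ∀ a, |(|u a| ^ p)| ≤ |x a| := by
    intro a
    have h1 : |u a| = |Real.sign (z a)| * |x a| ^ (1 / p) := by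
      rw [hu, abs_mul, abs_of_nonneg (Real.rpow_nonneg (abs_nonneg _) _)]
    rw [abs_of_nonneg (Real.rpow_nonneg (abs_nonneg _) _), h1,
      Real.mul_rpow (abs_nonneg _) (Real.rpow_nonneg (abs_nonneg _) _),
      myAux_rpow_inv_p hp (abs_nonneg _)]
    calc |Real.sign (z a)| ^ p * |x a|
        ≤ 1 * |x a| := by
          apply mul_le_mul_of_nonneg_right _ (abs_nonneg _)
          exact Real.rpow_le_one (abs_nonneg _) (myAux_abs_sign_le_one _) hp.le
      _ = |x a| := one_mul _
  have hvle : ∀ a, |(|v a| ^ p)| ≤ |y a| := by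
    intro a
    rw [abs_of_nonneg (Real.rpow_nonneg (abs_nonneg _) _), hv,
      abs_of_nonneg (Real.rpow_nonneg (abs_nonneg _) _),
      myAux_rpow_inv_p hp (abs_nonneg _)]
  refine ⟨u, v, E.ideal_mem hx (Filter.Eventually.of_forall hule),
    F.ideal_mem hy (Filter.Eventually.of_forall hvle),
    E.ideal_norm hx (Filter.Eventually.of_forall hule),
    F.ideal_norm hy (Filter.Eventually.of_forall hvle), ?_⟩
  filter_upwards [h] with a ha
  have ha' : |z a| ^ p = x a * y a := ha
  have hxy : |x a| * |y a| = |z a| ^ p := by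
    rw [← abs_mul, ← ha', abs_of_nonneg (Real.rpow_nonneg (abs_nonneg _) _)]
  show z a = u a * v a
  rw [hu, hv]
  calc z a = Real.sign (z a) * |z a| := (myAux_sign_mul_abs _).symm
    _ = Real.sign (z a) * ((|z a| ^ p) ^ (1 / p)) := by
        rw [myAux_rpow_p_inv hp (abs_nonneg _)]
    _ = Real.sign (z a) * ((|x a| * |y a|) ^ (1 / p)) := by rw [hxy]
    _ = Real.sign (z a) * (|x a| ^ (1 / p) * |y a| ^ (1 / p)) := by
        rw [Real.mul_rpow (abs_nonneg _) (abs_nonneg _)]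
    _ = Real.sign (z a) * |x a| ^ (1 / p) * (|y a| ^ (1 / p)) := by ring

lemma myAux_bwd {α : Type*} [MeasurableSpace α] {μ : Measure α}
    {p : ℝ} (hp : 0 < p) (z u v : α → ℝ) (h : z =ᵐ[μ] u * v) :
    (fun a => |z a| ^ p) =ᵐ[μ] (fun a => |u a| ^ p) * (fun a => |v a| ^ p) := by
  filter_upwards [h] with a ha
  have ha' : z a = u a * v a := ha
  show |z a| ^ p = |u a| ^ p * |v a| ^ p
  rw [ha', abs_mul, Real.mul_rpow (abs_nonneg _) (abs_nonneg _)]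

/-- Theorem 1(iii): (E ⊙ F)^{(p)} ≡ E^{(p)} ⊙ F^{(p)} isometrically, for 0 < p < ∞. -/
theorem conv_of_product (E F : IdealSpace μ) (p : ℝ) (hp : 0 < p) (z : α → ℝ) :
    ((fun a => |z a| ^ p) ∈ prodSet E F ↔ z ∈ prodSetG μ (convSet p E) (convSet p F)) ∧
    prodNorm E F (fun a => |z a| ^ p) ^ (1 / p) =
      prodNormG μ (convSet p E) (convSet p F) (convNorm p E) (convNorm p F) z := by
  classical
  set A : Set ℝ := {r | ∃ x ∈ E.carrier, ∃ y ∈ F.carrier,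
    (fun a => |z a| ^ p) =ᵐ[μ] x * y ∧ r = E.norm x * F.norm y} with hA
  set B : Set ℝ := {r | ∃ u ∈ convSet p E, ∃ v ∈ convSet p F,
    z =ᵐ[μ] u * v ∧ r = convNorm p E u * convNorm p F v} with hB
  have hA0 : ∀ r ∈ A, (0:ℝ) ≤ r := by
    rintro r ⟨x, hx, y, hy, -, rfl⟩
    exact mul_nonneg (E.norm_nonneg x) (F.norm_nonneg y)
  have hB0 : ∀ r ∈ B, (0:ℝ) ≤ r := by
    rintro r ⟨u, hu, v, hv, -, rfl⟩
    exact mul_nonneg (Real.rpow_nonneg (E.norm_nonneg _) _)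
      (Real.rpow_nonneg (F.norm_nonneg _) _)
  have hAbdd : BddBelow A := ⟨0, fun r hr => hA0 r hr⟩
  have hBbdd : BddBelow B := ⟨0, fun r hr => hB0 r hr⟩
  have map1 : ∀ r ∈ A, ∃ b ∈ B, b ≤ r ^ (1 / p) := by
    rintro r ⟨x, hx, y, hy, h, rfl⟩
    obtain ⟨u, v, huE, hvF, hun, hvn, huv⟩ := myAux_fwd E F hp z x y hx hy h
    refine ⟨convNorm p E u * convNorm p F v, ⟨u, huE, v, hvF, huv, rfl⟩, ?_⟩
    unfold convNorm
    calc E.norm (fun a => |u a| ^ p) ^ (1 / p) * F.norm (fun a => |v a| ^ p) ^ (1 / p)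
        ≤ E.norm x ^ (1 / p) * F.norm y ^ (1 / p) := by
          apply mul_le_mul
          · exact Real.rpow_le_rpow (E.norm_nonneg _) hun (by positivity)
          · exact Real.rpow_le_rpow (F.norm_nonneg _) hvn (by positivity)
          · exact Real.rpow_nonneg (F.norm_nonneg _) _
          · exact Real.rpow_nonneg (E.norm_nonneg _) _
      _ = (E.norm x * F.norm y) ^ (1 / p) := by
          rw [Real.mul_rpow (E.norm_nonneg _) (F.norm_nonneg _)]
  have map2 : ∀ b ∈ B, b ^ p ∈ A := by
    rintro b ⟨u, hu, v, hv, huv, rfl⟩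
    refine ⟨fun a => |u a| ^ p, hu, fun a => |v a| ^ p, hv, myAux_bwd hp z u v huv, ?_⟩
    unfold convNorm
    rw [← Real.mul_rpow (E.norm_nonneg _) (F.norm_nonneg _),
      myAux_rpow_inv_p hp (mul_nonneg (E.norm_nonneg _) (F.norm_nonneg _))]
  constructor
  · constructor
    · rintro ⟨x, hx, y, hy, h⟩
      obtain ⟨u, v, huE, hvF, -, -, huv⟩ := myAux_fwd E F hp z x y hx hy h
      exact ⟨u, huE, v, hvF, huv⟩
    · rintro ⟨u, hu, v, hv, huv⟩
      exact ⟨fun a => |u a| ^ p, hu, fun a => |v a| ^ p, hv, myAux_bwd hp z u v huv⟩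
  · show sInf A ^ (1 / p) = sInf B
    rcases Set.eq_empty_or_nonempty A with hAe | hAe
    · have hBe : B = ∅ := by
        rcases Set.eq_empty_or_nonempty B with h | ⟨b, hb⟩
        · exact h
        · exact absurd (map2 b hb) (by simp [hAe])
      rw [hAe, hBe, Real.sInf_empty, Real.zero_rpow (one_div_ne_zero hp.ne')]
    · obtain ⟨r0, hr0⟩ := hAe
      obtain ⟨b0, hb0, -⟩ := map1 r0 hr0
      have hBe : B.Nonempty := ⟨b0, hb0⟩
      have h0A : (0:ℝ) ≤ sInf A := le_csInf ⟨r0, hr0⟩ hA0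
      have h0B : (0:ℝ) ≤ sInf B := le_csInf hBe hB0
      apply le_antisymm
      · apply le_csInf hBe
        intro b hb
        have h1 : sInf A ≤ b ^ p := csInf_le hAbdd (map2 b hb)
        calc sInf A ^ (1 / p) ≤ (b ^ p) ^ (1 / p) :=
              Real.rpow_le_rpow h0A h1 (by positivity)
          _ = b := myAux_rpow_p_inv hp (hB0 b hb)
      · have key : sInf B ^ p ≤ sInf A := by
          apply le_csInf ⟨r0, hr0⟩
          intro r hr
          obtain ⟨b, hb, hble⟩ := map1 r hr
          calc sInf B ^ p ≤ b ^ p :=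
                Real.rpow_le_rpow h0B (csInf_le hBbdd hb) hp.le
            _ ≤ (r ^ (1 / p)) ^ p :=
                Real.rpow_le_rpow (hB0 b hb) hble hp.le
            _ = r := myAux_rpow_inv_p hp (hA0 r hr)
        calc sInf B = (sInf B ^ p) ^ (1 / p) := (myAux_rpow_p_inv hp h0B).symm
          _ ≤ sInf A ^ (1 / p) :=
              Real.rpow_le_rpow (Real.rpow_nonneg h0B _) key (by positivity)
end

section
/- Let E, F be Banach ideal spaces. Then E ⊙ F is isometrically equal to the 1/2-concavification of the Calderón space E^{1/2}F^{1/2}, that is E ⊙ F ≡ (E^{1/2}F^{1/2})^{(1/2)}; explicitly, ‖z‖_{E⊙F} = inf{max(‖x‖_E², ‖y‖_F²) : |z| = xy, ‖x‖_E = ‖y‖_F, x ∈ E₊, y ∈ F₊}. -/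
/-!
Every factorization `z = x y` can be replaced by `|z| = |x| |y|`, and rescaling
`(x, y) ↦ (t x, t⁻¹ y)` with `t = √(‖x‖ ‖y‖) / ‖x‖` makes the two norms equal to `√(‖x‖ ‖y‖)`
without changing the product. Conversely, `|z| ≤ x y` with `x ≥ 0` is turned into an exact
factorization `z = x (z / x)` with `|z / x| ≤ y`, at no cost in norm. Hence the three infima
run over mutually dominating sets of values (after taking square roots for the Calderón norm).
-/

open MeasureTheory

variable {α : Type*} [MeasurableSpace α] {μ : Measure α}

/-- The Calderón space E^{1/2}F^{1/2}: membership. -/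
def caldHalfSet (E F : IdealSpace μ) : Set (α → ℝ) :=
  {w | ∃ x ∈ E.carrier, ∃ y ∈ F.carrier, (∀ᵐ a ∂μ, 0 ≤ x a) ∧ (∀ᵐ a ∂μ, 0 ≤ y a) ∧
      ∀ᵐ a ∂μ, |w a| ≤ x a ^ ((2 : ℝ)⁻¹) * y a ^ ((2 : ℝ)⁻¹)}

/-- The Calderón space norm ‖w‖ = inf{max(‖x‖_E,‖y‖_F) : |w| ≤ x^{1/2}y^{1/2}, x,y ≥ 0}. -/
noncomputable def caldHalfNorm (E F : IdealSpace μ) (w : α → ℝ) : ℝ :=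
  sInf {r | ∃ x ∈ E.carrier, ∃ y ∈ F.carrier, (∀ᵐ a ∂μ, 0 ≤ x a) ∧ (∀ᵐ a ∂μ, 0 ≤ y a) ∧
      (∀ᵐ a ∂μ, |w a| ≤ x a ^ ((2 : ℝ)⁻¹) * y a ^ ((2 : ℝ)⁻¹)) ∧
      r = max (E.norm x) (F.norm y)}

open Filter

namespace IdealSpace

variable (E : IdealSpace μ)

lemma norm_zero : E.norm 0 = 0 := by
  simpa using E.norm_smul 0 0

variable {E}

lemma abs_mem {x : α → ℝ} (hx : x ∈ E.carrier) : (fun a => |x a|) ∈ E.carrier :=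
  E.ideal_mem hx (.of_forall fun a => (abs_abs (x a)).le)

lemma norm_abs_le {x : α → ℝ} (hx : x ∈ E.carrier) : E.norm (fun a => |x a|) ≤ E.norm x :=
  E.ideal_norm hx (.of_forall fun a => (abs_abs (x a)).le)

lemma exists_eq_mul_of_abs_le_mul {z x y : α → ℝ} (hy : y ∈ E.carrier)
    (hx0 : ∀ᵐ a ∂μ, 0 ≤ x a) (hz : ∀ᵐ a ∂μ, |z a| ≤ x a * y a) :
    ∃ y' ∈ E.carrier, z =ᵐ[μ] x * y' ∧ E.norm y' ≤ E.norm y := by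
  -- `z / x` is `0` where `x` vanishes, and so is `z` there
  have hdom : ∀ᵐ a ∂μ, |z a / x a| ≤ |y a| := by
    filter_upwards [hx0, hz] with a hxa hza
    rcases hxa.eq_or_lt with hxa | hxa
    · simp [← hxa]
    · rw [abs_div, abs_of_pos hxa, div_le_iff₀ hxa]
      exact hza.trans (by rw [mul_comm]; gcongr; exact le_abs_self _)
  refine ⟨fun a => z a / x a, E.ideal_mem hy hdom, ?_, E.ideal_norm hy hdom⟩
  filter_upwards [hx0, hz] with a hxa hza
  rcases hxa.eq_or_lt with hxa | hxa
  · simpa [← hxa] using hza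
  · exact (mul_div_cancel₀ (z a) hxa.ne').symm

end IdealSpace

lemma abs_sqrt_le_rpow_mul_rpow_iff {s x y : ℝ} (hx : 0 ≤ x) (hy : 0 ≤ y) :
    |√s| ≤ x ^ (2 : ℝ)⁻¹ * y ^ (2 : ℝ)⁻¹ ↔ s ≤ x * y := by
  rw [abs_of_nonneg (Real.sqrt_nonneg s), ← Real.mul_rpow hx hy, ← one_div,
    ← Real.sqrt_eq_rpow, Real.sqrt_le_sqrt_iff (mul_nonneg hx hy)]

lemma Real.sInf_image_sqrt {s : Set ℝ} (hs : BddBelow s) :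
    sInf (Real.sqrt '' s) = √(sInf s) := by
  rcases s.eq_empty_or_nonempty with rfl | hne
  · simp
  · exact (Real.sqrt_monotone.map_csInf_of_continuousAt
      Real.continuous_sqrt.continuousAt hne hs).symm

lemma exists_balanced_factorization (E F : IdealSpace μ) {z x y : α → ℝ}
    (hx : x ∈ E.carrier) (hy : y ∈ F.carrier) (hx0 : ∀ᵐ a ∂μ, 0 ≤ x a)
    (hy0 : ∀ᵐ a ∂μ, 0 ≤ y a) (hz : ∀ᵐ a ∂μ, |z a| = x a * y a) :
    ∃ x' ∈ E.carrier, ∃ y' ∈ F.carrier, (∀ᵐ a ∂μ, 0 ≤ x' a) ∧ (∀ᵐ a ∂μ, 0 ≤ y' a) ∧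
      (∀ᵐ a ∂μ, |z a| = x' a * y' a) ∧
      E.norm x' = √(E.norm x * F.norm y) ∧ F.norm y' = √(E.norm x * F.norm y) := by
  rcases (mul_nonneg (E.norm_nonneg x) (F.norm_nonneg y)).eq_or_lt with hp | hp
  · have hz0 : ∀ᵐ a ∂μ, |z a| = 0 := by
      rcases mul_eq_zero.1 hp.symm with h | h
      · filter_upwards [hz, (E.norm_eq_zero x hx).1 h] with a hza hxa
        simp [hza, hxa]
      · filter_upwards [hz, (F.norm_eq_zero y hy).1 h] with a hza hya
        simp [hza, hya]
    refine ⟨0, E.zero_mem, 0, F.zero_mem, .of_forall fun _ => le_rfl, .of_forall fun _ => le_rfl,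
      by simpa using hz0, ?_, ?_⟩
    · rw [← hp, Real.sqrt_zero, E.norm_zero]
    · rw [← hp, Real.sqrt_zero, F.norm_zero]
  set s := √(E.norm x * F.norm y)
  have hs : 0 < s := Real.sqrt_pos.2 hp
  have hxn : 0 < E.norm x := pos_of_mul_pos_left hp (F.norm_nonneg y)
  set t := s / E.norm x
  have ht : 0 < t := div_pos hs hxn
  refine ⟨t • x, E.smul_mem t hx, t⁻¹ • y, F.smul_mem t⁻¹ hy, ?_, ?_, ?_, ?_, ?_⟩
  · filter_upwards [hx0] with a ha using mul_nonneg ht.le ha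
  · filter_upwards [hy0] with a ha using mul_nonneg (inv_pos.2 ht).le ha
  · filter_upwards [hz] with a ha
    simp only [Pi.smul_apply, smul_eq_mul, ha]
    field_simp
  · rw [E.norm_smul, abs_of_pos ht, div_mul_cancel₀ s hxn.ne']
  · rw [F.norm_smul, abs_of_pos (inv_pos.2 ht), inv_div, div_mul_eq_mul_div, Real.div_sqrt]

section NormSets

variable (E F : IdealSpace μ)

def prodNormSet (z : α → ℝ) : Set ℝ :=
  {r | ∃ x ∈ E.carrier, ∃ y ∈ F.carrier, z =ᵐ[μ] x * y ∧ r = E.norm x * F.norm y}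

def caldHalfNormSet (w : α → ℝ) : Set ℝ :=
  {r | ∃ x ∈ E.carrier, ∃ y ∈ F.carrier, (∀ᵐ a ∂μ, 0 ≤ x a) ∧ (∀ᵐ a ∂μ, 0 ≤ y a) ∧
      (∀ᵐ a ∂μ, |w a| ≤ x a ^ ((2 : ℝ)⁻¹) * y a ^ ((2 : ℝ)⁻¹)) ∧
      r = max (E.norm x) (F.norm y)}

def balancedNormSet (z : α → ℝ) : Set ℝ :=
  {r | ∃ x ∈ E.carrier, ∃ y ∈ F.carrier, (∀ᵐ a ∂μ, 0 ≤ x a) ∧ (∀ᵐ a ∂μ, 0 ≤ y a) ∧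
      (∀ᵐ a ∂μ, |z a| = x a * y a) ∧ E.norm x = F.norm y ∧
      r = max (E.norm x ^ 2) (F.norm y ^ 2)}

variable {E F} {z : α → ℝ}

lemma nonneg_of_mem_prodNormSet {r : ℝ} (hr : r ∈ prodNormSet E F z) : 0 ≤ r := by
  obtain ⟨x, -, y, -, -, rfl⟩ := hr
  exact mul_nonneg (E.norm_nonneg x) (F.norm_nonneg y)

lemma mem_prodSet_iff_nonempty : z ∈ prodSet E F ↔ (prodNormSet E F z).Nonempty :=
  ⟨fun ⟨x, hx, y, hy, hz⟩ => ⟨_, x, hx, y, hy, hz, rfl⟩,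
    fun ⟨_, x, hx, y, hy, hz, _⟩ => ⟨x, hx, y, hy, hz⟩⟩

lemma mem_caldHalfSet_iff_nonempty {w : α → ℝ} :
    w ∈ caldHalfSet E F ↔ (caldHalfNormSet E F w).Nonempty :=
  ⟨fun ⟨x, hx, y, hy, hx0, hy0, hw⟩ => ⟨_, x, hx, y, hy, hx0, hy0, hw, rfl⟩,
    fun ⟨_, x, hx, y, hy, hx0, hy0, hw, _⟩ => ⟨x, hx, y, hy, hx0, hy0, hw⟩⟩

lemma exists_mem_prodNormSet_le_of_abs_le_mul {x y : α → ℝ} (hx : x ∈ E.carrier)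
    (hy : y ∈ F.carrier) (hx0 : ∀ᵐ a ∂μ, 0 ≤ x a) (hz : ∀ᵐ a ∂μ, |z a| ≤ x a * y a) :
    ∃ r ∈ prodNormSet E F z, r ≤ E.norm x * F.norm y := by
  obtain ⟨y', hy', hzy', hny'⟩ := F.exists_eq_mul_of_abs_le_mul hy hx0 hz
  exact ⟨_, ⟨x, hx, y', hy', hzy', rfl⟩, mul_le_mul_of_nonneg_left hny' (E.norm_nonneg x)⟩

lemma exists_balanced_of_mem_prodNormSet {r : ℝ} (hr : r ∈ prodNormSet E F z) :
    ∃ x ∈ E.carrier, ∃ y ∈ F.carrier, (∀ᵐ a ∂μ, 0 ≤ x a) ∧ (∀ᵐ a ∂μ, 0 ≤ y a) ∧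
      (∀ᵐ a ∂μ, |z a| = x a * y a) ∧ E.norm x = F.norm y ∧ E.norm x ≤ √r := by
  obtain ⟨x, hx, y, hy, hz, rfl⟩ := hr
  obtain ⟨x', hx', y', hy', hx'0, hy'0, hz', hnx', hny'⟩ :=
    exists_balanced_factorization E F (E.abs_mem hx) (F.abs_mem hy)
      (.of_forall fun a => abs_nonneg (x a)) (.of_forall fun a => abs_nonneg (y a))
      (hz.mono fun a ha => show |z a| = |x a| * |y a| by rw [ha, Pi.mul_apply, abs_mul])
  refine ⟨x', hx', y', hy', hx'0, hy'0, hz', hnx'.trans hny'.symm, hnx'.trans_le ?_⟩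
  exact Real.sqrt_le_sqrt
    (mul_le_mul (E.norm_abs_le hx) (F.norm_abs_le hy) (F.norm_nonneg _) (E.norm_nonneg x))

lemma exists_mem_balancedNormSet_le {r : ℝ} (hr : r ∈ prodNormSet E F z) :
    ∃ c ∈ balancedNormSet E F z, c ≤ r := by
  obtain ⟨x, hx, y, hy, hx0, hy0, hz, hxy, hxr⟩ := exists_balanced_of_mem_prodNormSet hr
  refine ⟨_, ⟨x, hx, y, hy, hx0, hy0, hz, hxy, rfl⟩, ?_⟩
  rw [← hxy, max_self, ← Real.le_sqrt (E.norm_nonneg x) (nonneg_of_mem_prodNormSet hr)]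
  exact hxr

lemma exists_mem_prodNormSet_le_of_mem_balancedNormSet {c : ℝ}
    (hc : c ∈ balancedNormSet E F z) : ∃ r ∈ prodNormSet E F z, r ≤ c := by
  obtain ⟨x, hx, y, hy, hx0, -, hz, hxy, rfl⟩ := hc
  obtain ⟨r, hr, hrxy⟩ :=
    exists_mem_prodNormSet_le_of_abs_le_mul hx hy hx0 (hz.mono fun _ => le_of_eq)
  exact ⟨r, hr, hrxy.trans_eq (by rw [← hxy, max_self, sq])⟩

lemma exists_mem_caldHalfNormSet_le_sqrt {r : ℝ} (hr : r ∈ prodNormSet E F z) :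
    ∃ b ∈ caldHalfNormSet E F (fun a => √|z a|), b ≤ √r := by
  obtain ⟨x, hx, y, hy, hx0, hy0, hz, hxy, hxr⟩ := exists_balanced_of_mem_prodNormSet hr
  refine ⟨_, ⟨x, hx, y, hy, hx0, hy0, ?_, rfl⟩, by rwa [← hxy, max_self]⟩
  filter_upwards [hx0, hy0, hz] with a hxa hya hza
  exact (abs_sqrt_le_rpow_mul_rpow_iff hxa hya).2 hza.le

lemma exists_sqrt_mem_prodNormSet_le {b : ℝ} (hb : b ∈ caldHalfNormSet E F (fun a => √|z a|)) :
    ∃ r ∈ prodNormSet E F z, √r ≤ b := by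
  obtain ⟨x, hx, y, hy, hx0, hy0, hz, rfl⟩ := hb
  have hz' : ∀ᵐ a ∂μ, |z a| ≤ x a * y a := by
    filter_upwards [hx0, hy0, hz] with a hxa hya hza
    exact (abs_sqrt_le_rpow_mul_rpow_iff hxa hya).1 hza
  obtain ⟨r, hr, hrxy⟩ := exists_mem_prodNormSet_le_of_abs_le_mul hx hy hx0 hz'
  refine ⟨r, hr, (Real.sqrt_le_left (le_max_of_le_left (E.norm_nonneg x))).2 ?_⟩
  rw [sq]
  exact hrxy.trans (mul_le_mul (le_max_left _ _) (le_max_right _ _) (F.norm_nonneg y)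
    (le_max_of_le_left (E.norm_nonneg x)))

end NormSets

/-- Theorem 1(iv): E ⊙ F ≡ (E^{1/2}F^{1/2})^{(1/2)}: membership coincides,
‖z‖_{E⊙F} = (‖|z|^{1/2}‖_{E^{1/2}F^{1/2}})², and the explicit equal-norm formula holds. -/
theorem product_eq_half_concavification (E F : IdealSpace μ) (z : α → ℝ) :
    (z ∈ prodSet E F ↔ (fun a => Real.sqrt |z a|) ∈ caldHalfSet E F) ∧
    prodNorm E F z = caldHalfNorm E F (fun a => Real.sqrt |z a|) ^ 2 ∧
    prodNorm E F z =
      sInf {r | ∃ x ∈ E.carrier, ∃ y ∈ F.carrier, (∀ᵐ a ∂μ, 0 ≤ x a) ∧ (∀ᵐ a ∂μ, 0 ≤ y a) ∧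
        (∀ᵐ a ∂μ, |z a| = x a * y a) ∧ E.norm x = F.norm y ∧
        r = max (E.norm x ^ 2) (F.norm y ^ 2)} := by
  have hprod_nonneg : ∀ r ∈ prodNormSet E F z, 0 ≤ r := fun _ => nonneg_of_mem_prodNormSet
  have hsqrt_le : ∀ b ∈ caldHalfNormSet E F (fun a => √|z a|), ∃ s ∈ Real.sqrt '' prodNormSet E F z,
      s ≤ b := fun b hb =>
    let ⟨r, hr, hrb⟩ := exists_sqrt_mem_prodNormSet_le hb
    ⟨_, ⟨r, hr, rfl⟩, hrb⟩
  have hcald_le : ∀ s ∈ Real.sqrt '' prodNormSet E F z,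
      ∃ b ∈ caldHalfNormSet E F (fun a => √|z a|), b ≤ s := by
    rintro _ ⟨r, hr, rfl⟩
    exact exists_mem_caldHalfNormSet_le_sqrt hr
  have hcald : caldHalfNorm E F (fun a => √|z a|) = √(prodNorm E F z) :=
    (csInf_eq_csInf_of_forall_exists_le hsqrt_le hcald_le).trans (Real.sInf_image_sqrt ⟨0, hprod_nonneg⟩)
  refine ⟨?_, ?_, csInf_eq_csInf_of_forall_exists_le (fun _ => exists_mem_balancedNormSet_le)
    (fun _ => exists_mem_prodNormSet_le_of_mem_balancedNormSet)⟩
  · rw [mem_prodSet_iff_nonempty, mem_caldHalfSet_iff_nonempty]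
    exact ⟨fun ⟨r, hr⟩ => (exists_mem_caldHalfNormSet_le_sqrt hr).imp fun _ h => h.1,
      fun ⟨b, hb⟩ => (exists_sqrt_mem_prodNormSet_le hb).imp fun _ h => h.1⟩
  · rw [hcald]
    exact (Real.sq_sqrt (Real.sInf_nonneg hprod_nonneg)).symm
end

section
/- Let E be p₀-convex with constant K₀ and F be p₁-convex with constant K₁ (Banach ideal spaces), and 0 < θ < 1. Then the Calderón space E^{1-θ}F^θ is p-convex with constant at most K₀^{1-θ}K₁^θ, where 1/p = (1-θ)/p₀ + θ/p₁. -/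
open MeasureTheory

variable {α : Type*} [MeasurableSpace α] {μ : Measure α}

/-- p-convexity with constant K of a normed set of functions. -/
def PConvexOn (S : Set (α → ℝ)) (N : (α → ℝ) → ℝ) (p K : ℝ) : Prop :=
  ∀ (n : ℕ) (x : Fin n → α → ℝ), (∀ k, x k ∈ S) →
    (fun a => (∑ k, |x k a| ^ p) ^ (1 / p)) ∈ S ∧
    N (fun a => (∑ k, |x k a| ^ p) ^ (1 / p)) ≤ K * (∑ k, N (x k) ^ p) ^ (1 / p)

/-- The Calderón space E^θ F^{1-θ}: membership. -/
def caldSet (θ : ℝ) (E F : IdealSpace μ) : Set (α → ℝ) :=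
  {z | ∃ lam > (0 : ℝ), ∃ x ∈ E.carrier, ∃ y ∈ F.carrier, E.norm x ≤ 1 ∧ F.norm y ≤ 1 ∧
      ∀ᵐ a ∂μ, |z a| ≤ lam * |x a| ^ θ * |y a| ^ (1 - θ)}

/-- The Calderón space norm: the infimum of admissible λ. -/
noncomputable def caldNorm (θ : ℝ) (E F : IdealSpace μ) (z : α → ℝ) : ℝ :=
  sInf {lam | 0 < lam ∧ ∃ x ∈ E.carrier, ∃ y ∈ F.carrier, E.norm x ≤ 1 ∧ F.norm y ≤ 1 ∧
      ∀ᵐ a ∂μ, |z a| ≤ lam * |x a| ^ θ * |y a| ^ (1 - θ)}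

/-!
Write `|zₖ| ≤ λₖ |xₖ|^{1-θ} |yₖ|^θ` with `‖xₖ‖_E, ‖yₖ‖_F ≤ 1` and split
`λₖ = (λₖ^{p/p₀})^{1-θ} (λₖ^{p/p₁})^θ`. Hölder's inequality for the triple
`(p₀/(1-θ), p₁/θ, p)` bounds `(∑ |zₖ|^p)^{1/p}` pointwise by `U^{1-θ} V^θ`, where `U` is the
`p₀`-sum of the `λₖ^{p/p₀} xₖ` and `V` the `p₁`-sum of the `λₖ^{p/p₁} yₖ`. Convexity of `E`
and `F` gives `‖U‖ ≤ K₀ Λ^{1/p₀}` and `‖V‖ ≤ K₁ Λ^{1/p₁}` with `Λ = ∑ λₖ^p`, and the Calderón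
norm of `U^{1-θ} V^θ` is at most `‖U‖^{1-θ} ‖V‖^θ = K₀^{1-θ} K₁^θ Λ^{1/p}`. Finally let the
`λₖ` decrease to the Calderón norms of the `zₖ`.
-/

open Finset

theorem Real.pos_of_one_div_eq_interp {p p₀ p₁ θ : ℝ} (hp₀ : 0 < p₀) (hp₁ : 0 < p₁) (hθ : 0 < θ)
    (hθ1 : θ < 1) (hp : 1 / p = (1 - θ) / p₀ + θ / p₁) : 0 < p := by
  have hθ' : 0 < 1 - θ := by linarith
  exact one_div_pos.mp (by rw [hp]; positivity)

theorem Real.rpow_one_div_interp {p p₀ p₁ θ l : ℝ} (hp : 1 / p = (1 - θ) / p₀ + θ / p₁)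
    (hp0 : p ≠ 0) (hl : 0 ≤ l) :
    (l ^ (1 / p₀)) ^ (1 - θ) * (l ^ (1 / p₁)) ^ θ = l ^ (1 / p) := by
  have hsum : 1 / p₀ * (1 - θ) + 1 / p₁ * θ = 1 / p := by rw [hp]; ring
  rw [← Real.rpow_mul hl, ← Real.rpow_mul hl,
    ← Real.rpow_add' hl (hsum ▸ one_div_ne_zero hp0), hsum]

theorem Real.Lp_calderon_le {ι : Type*} (s : Finset ι) (a b : ι → ℝ) {p p₀ p₁ θ : ℝ}
    (hp₀ : 0 < p₀) (hp₁ : 0 < p₁) (hθ : 0 < θ) (hθ1 : θ < 1)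
    (hp : 1 / p = (1 - θ) / p₀ + θ / p₁) :
    (∑ i ∈ s, (|a i| ^ (1 - θ) * |b i| ^ θ) ^ p) ^ (1 / p) ≤
      ((∑ i ∈ s, |a i| ^ p₀) ^ (1 / p₀)) ^ (1 - θ) * ((∑ i ∈ s, |b i| ^ p₁) ^ (1 / p₁)) ^ θ := by
  have hθ' : 0 < 1 - θ := by linarith
  have hp_pos := Real.pos_of_one_div_eq_interp hp₀ hp₁ hθ hθ1 hp
  have htriple : (p₀ / (1 - θ)).HolderTriple (p₁ / θ) p :=
    ⟨by rw [inv_div, inv_div, ← one_div, hp], by positivity, by positivity⟩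
  have hA : ∀ i, (|a i| ^ (1 - θ)) ^ (p₀ / (1 - θ)) = |a i| ^ p₀ := fun i => by
    rw [← Real.rpow_mul (abs_nonneg _), mul_div_cancel₀ _ hθ'.ne']
  have hB : ∀ i, (|b i| ^ θ) ^ (p₁ / θ) = |b i| ^ p₁ := fun i => by
    rw [← Real.rpow_mul (abs_nonneg _), mul_div_cancel₀ _ hθ.ne']
  have holder := Real.Lr_rpow_le_Lp_mul_Lq_of_nonneg s htriple
    (fun i _ => Real.rpow_nonneg (abs_nonneg (a i)) (1 - θ))
    (fun i _ => Real.rpow_nonneg (abs_nonneg (b i)) θ)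
  simp only [hA, hB] at holder
  calc (∑ i ∈ s, (|a i| ^ (1 - θ) * |b i| ^ θ) ^ p) ^ (1 / p)
      ≤ ((∑ i ∈ s, |a i| ^ p₀) ^ (p / (p₀ / (1 - θ))) *
          (∑ i ∈ s, |b i| ^ p₁) ^ (p / (p₁ / θ))) ^ (1 / p) := by gcongr
    _ = _ := by
      rw [Real.mul_rpow (by positivity) (by positivity), ← Real.rpow_mul (by positivity),
        ← Real.rpow_mul (by positivity), ← Real.rpow_mul (by positivity),
        ← Real.rpow_mul (by positivity)]
      congr 2 <;> field_simp

theorem Real.mul_rpow_mul_rpow_split {p p₀ p₁ θ l u v : ℝ} (hp : 1 / p = (1 - θ) / p₀ + θ / p₁)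
    (hp0 : p ≠ 0) (hl : 0 ≤ l) (hu : 0 ≤ u) (hv : 0 ≤ v) :
    l * u ^ (1 - θ) * v ^ θ =
      ((l ^ p) ^ (1 / p₀) * u) ^ (1 - θ) * ((l ^ p) ^ (1 / p₁) * v) ^ θ := by
  have hlp : 0 ≤ l ^ p := Real.rpow_nonneg hl p
  rw [Real.mul_rpow (Real.rpow_nonneg hlp _) hu, Real.mul_rpow (Real.rpow_nonneg hlp _) hv]
  conv_lhs => rw [← Real.rpow_rpow_inv hl hp0, ← one_div, ← Real.rpow_one_div_interp hp hp0 hlp]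
  ring

noncomputable def pSum {β : Type*} {n : ℕ} (p : ℝ) (x : Fin n → β → ℝ) : β → ℝ :=
  fun a => (∑ k, |x k a| ^ p) ^ (1 / p)

theorem pSum_nonneg {β : Type*} {n : ℕ} (p : ℝ) (x : Fin n → β → ℝ) (a : β) : 0 ≤ pSum p x a :=
  Real.rpow_nonneg (sum_nonneg fun _ _ => Real.rpow_nonneg (abs_nonneg _) _) _

theorem PConvexOn.pSum_smul_mem_and_norm_le {E : IdealSpace μ} {q K : ℝ}
    (hE : PConvexOn E.carrier E.norm q K) (hq : 0 < q) (hK : 0 ≤ K) {n : ℕ} (c : Fin n → ℝ)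
    {x : Fin n → α → ℝ} (hx : ∀ k, x k ∈ E.carrier) (hx1 : ∀ k, E.norm (x k) ≤ 1) :
    pSum q (fun k => c k • x k) ∈ E.carrier ∧
      E.norm (pSum q (fun k => c k • x k)) ≤ K * (∑ k, |c k| ^ q) ^ (1 / q) := by
  obtain ⟨hmem, hnorm⟩ := hE n (fun k => c k • x k) (fun k => E.smul_mem _ (hx k))
  refine ⟨hmem, hnorm.trans ?_⟩
  gcongr with k
  · exact sum_nonneg fun k _ => Real.rpow_nonneg (E.norm_nonneg _) _
  · exact E.norm_nonneg _
  rw [E.norm_smul]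
  exact mul_le_of_le_one_right (abs_nonneg _) (hx1 k)

theorem le_of_forall_pos_le_of_continuousAt {f : ℝ → ℝ} {c : ℝ} (hf : ContinuousAt f 0)
    (h : ∀ ε > 0, c ≤ f ε) : c ≤ f 0 :=
  ge_of_tendsto (hf.tendsto.mono_left nhdsWithin_le_nhds)
    (eventually_nhdsWithin_of_forall (s := Set.Ioi 0) h)

def caldAdmissible (θ : ℝ) (E F : IdealSpace μ) (z : α → ℝ) : Set ℝ :=
  {lam | 0 < lam ∧ ∃ x ∈ E.carrier, ∃ y ∈ F.carrier, E.norm x ≤ 1 ∧ F.norm y ≤ 1 ∧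
      ∀ᵐ a ∂μ, |z a| ≤ lam * |x a| ^ θ * |y a| ^ (1 - θ)}

section Calderon

variable {θ : ℝ} {E F : IdealSpace μ} {z : α → ℝ} {lam : ℝ}

theorem mem_caldSet_of_mem_caldAdmissible (h : lam ∈ caldAdmissible θ E F z) :
    z ∈ caldSet θ E F :=
  ⟨lam, h⟩

theorem caldNorm_le_of_mem_caldAdmissible (h : lam ∈ caldAdmissible θ E F z) :
    caldNorm θ E F z ≤ lam :=
  csInf_le ⟨0, fun _ hl => hl.1.le⟩ h

theorem exists_mem_caldAdmissible_lt (hz : z ∈ caldSet θ E F) {ε : ℝ} (hε : 0 < ε) :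
    ∃ lam ∈ caldAdmissible θ E F z, lam < caldNorm θ E F z + ε :=
  exists_lt_of_csInf_lt ⟨_, hz.choose_spec⟩ (lt_add_of_pos_right _ hε)

theorem rpow_mul_rpow_mem_caldAdmissible {U V : α → ℝ} {M₀ M₁ : ℝ} (hM₀ : 0 < M₀) (hM₁ : 0 < M₁)
    (hU : U ∈ E.carrier) (hUM : E.norm U ≤ M₀) (hV : V ∈ F.carrier) (hVM : F.norm V ≤ M₁)
    (hz : ∀ᵐ a ∂μ, |z a| ≤ |U a| ^ θ * |V a| ^ (1 - θ)) :
    M₀ ^ θ * M₁ ^ (1 - θ) ∈ caldAdmissible θ E F z := by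
  refine ⟨by positivity, M₀⁻¹ • U, E.smul_mem _ hU, M₁⁻¹ • V, F.smul_mem _ hV, ?_, ?_, ?_⟩
  · rw [E.norm_smul, abs_inv, abs_of_pos hM₀, inv_mul_le_one₀ hM₀]
    exact hUM
  · rw [F.norm_smul, abs_inv, abs_of_pos hM₁, inv_mul_le_one₀ hM₁]
    exact hVM
  filter_upwards [hz] with a ha
  refine ha.trans_eq ?_
  simp only [Pi.smul_apply, smul_eq_mul, abs_mul, abs_inv, abs_of_pos hM₀, abs_of_pos hM₁]
  rw [Real.mul_rpow (by positivity) (abs_nonneg _), Real.mul_rpow (by positivity) (abs_nonneg _),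
    Real.inv_rpow hM₀.le, Real.inv_rpow hM₁.le]
  have : 0 < M₀ ^ θ := by positivity
  have : 0 < M₁ ^ (1 - θ) := by positivity
  field_simp

theorem mem_caldSet_and_caldNorm_le {U V : α → ℝ} (hθ : 0 ≤ θ) (hθ1 : θ ≤ 1)
    (hU : U ∈ E.carrier) (hV : V ∈ F.carrier)
    (hz : ∀ᵐ a ∂μ, |z a| ≤ |U a| ^ θ * |V a| ^ (1 - θ)) :
    z ∈ caldSet θ E F ∧ caldNorm θ E F z ≤ E.norm U ^ θ * F.norm V ^ (1 - θ) := by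
  have hadm : ∀ ε > 0, (E.norm U + ε) ^ θ * (F.norm V + ε) ^ (1 - θ) ∈ caldAdmissible θ E F z :=
    fun ε hε => rpow_mul_rpow_mem_caldAdmissible (by linarith [E.norm_nonneg U])
      (by linarith [F.norm_nonneg V]) hU (by linarith) hV (by linarith) hz
  refine ⟨mem_caldSet_of_mem_caldAdmissible (hadm 1 one_pos), ?_⟩
  have hcont : ContinuousAt (fun ε => (E.norm U + ε) ^ θ * (F.norm V + ε) ^ (1 - θ)) 0 := by
    fun_prop (disch := first | exact Or.inr hθ | exact Or.inr (sub_nonneg.mpr hθ1))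
  simpa using le_of_forall_pos_le_of_continuousAt hcont
    fun ε hε => caldNorm_le_of_mem_caldAdmissible (hadm ε hε)

theorem pSum_mem_caldSet_and_caldNorm_le {p₀ p₁ p K₀ K₁ : ℝ} (hp₀ : 0 < p₀) (hp₁ : 0 < p₁)
    (hK₀ : 0 ≤ K₀) (hK₁ : 0 ≤ K₁) (hθ : 0 < θ) (hθ1 : θ < 1)
    (hp : 1 / p = (1 - θ) / p₀ + θ / p₁)
    (hE : PConvexOn E.carrier E.norm p₀ K₀) (hF : PConvexOn F.carrier F.norm p₁ K₁)
    {n : ℕ} {z : Fin n → α → ℝ} {lam : Fin n → ℝ}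
    (hlam : ∀ k, lam k ∈ caldAdmissible (1 - θ) E F (z k)) :
    pSum p z ∈ caldSet (1 - θ) E F ∧
      caldNorm (1 - θ) E F (pSum p z) ≤ K₀ ^ (1 - θ) * K₁ ^ θ * (∑ k, lam k ^ p) ^ (1 / p) := by
  have hp_pos := Real.pos_of_one_div_eq_interp hp₀ hp₁ hθ hθ1 hp
  choose x hx y hy hx1 hy1 hzxy using fun k => (hlam k).2
  have hlam_pow : ∀ k, 0 ≤ lam k ^ p := fun k => Real.rpow_nonneg (hlam k).1.le p
  have hc : ∀ k {q : ℝ}, 0 < q → |(lam k ^ p) ^ (1 / q)| ^ q = lam k ^ p := fun k q hq => by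
    rw [abs_of_nonneg (Real.rpow_nonneg (hlam_pow k) _), one_div,
      Real.rpow_inv_rpow (hlam_pow k) hq.ne']
  obtain ⟨hU, hUnorm⟩ :=
    hE.pSum_smul_mem_and_norm_le hp₀ hK₀ (fun k => (lam k ^ p) ^ (1 / p₀)) hx hx1
  obtain ⟨hV, hVnorm⟩ :=
    hF.pSum_smul_mem_and_norm_le hp₁ hK₁ (fun k => (lam k ^ p) ^ (1 / p₁)) hy hy1
  simp only [hc _ hp₀, hc _ hp₁] at hUnorm hVnorm
  have hΛ : 0 ≤ ∑ k, lam k ^ p := sum_nonneg fun k _ => hlam_pow k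
  have hpt : ∀ᵐ a ∂μ, |pSum p z a| ≤
      |pSum p₀ (fun k => (lam k ^ p) ^ (1 / p₀) • x k) a| ^ (1 - θ) *
        |pSum p₁ (fun k => (lam k ^ p) ^ (1 / p₁) • y k) a| ^ (1 - (1 - θ)) := by
    filter_upwards [ae_all_iff.mpr hzxy] with a ha
    rw [sub_sub_cancel, abs_of_nonneg (pSum_nonneg _ _ a), abs_of_nonneg (pSum_nonneg _ _ a),
      abs_of_nonneg (pSum_nonneg _ _ a)]
    calc pSum p z a
        ≤ (∑ k, (|((lam k ^ p) ^ (1 / p₀) • x k) a| ^ (1 - θ) *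
            |((lam k ^ p) ^ (1 / p₁) • y k) a| ^ θ) ^ p) ^ (1 / p) := by
          unfold pSum
          gcongr with k
          refine (ha k).trans_eq ?_
          simp only [Pi.smul_apply, smul_eq_mul, abs_mul, sub_sub_cancel,
            abs_of_nonneg (Real.rpow_nonneg (hlam_pow k) _)]
          exact Real.mul_rpow_mul_rpow_split hp hp_pos.ne' (hlam k).1.le (abs_nonneg _)
            (abs_nonneg _)
      _ ≤ _ := Real.Lp_calderon_le _ _ _ hp₀ hp₁ hθ hθ1 hp
  obtain ⟨hmem, hnorm⟩ := mem_caldSet_and_caldNorm_le (by linarith) (by linarith) hU hV hpt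
  refine ⟨hmem, hnorm.trans ?_⟩
  rw [sub_sub_cancel]
  calc _ ≤ (K₀ * (∑ k, lam k ^ p) ^ (1 / p₀)) ^ (1 - θ) *
          (K₁ * (∑ k, lam k ^ p) ^ (1 / p₁)) ^ θ := by
        have hU0 := E.norm_nonneg (pSum p₀ fun k => (lam k ^ p) ^ (1 / p₀) • x k)
        have hV0 := F.norm_nonneg (pSum p₁ fun k => (lam k ^ p) ^ (1 / p₁) • y k)
        gcongr
    _ = K₀ ^ (1 - θ) * K₁ ^ θ * (∑ k, lam k ^ p) ^ (1 / p) := by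
        rw [Real.mul_rpow hK₀ (by positivity), Real.mul_rpow hK₁ (by positivity),
          ← Real.rpow_one_div_interp hp hp_pos.ne' hΛ]
        ring

end Calderon

/-- Lemma 2: if E is p₀-convex with constant K₀ and F is p₁-convex with constant K₁,
then the Calderón space E^{1-θ}F^θ is p-convex with constant at most K₀^{1-θ}K₁^θ,
where 1/p = (1-θ)/p₀ + θ/p₁. -/
theorem calderon_p_convex (E F : IdealSpace μ) (p₀ p₁ p K₀ K₁ θ : ℝ)
    (hp₀ : 1 ≤ p₀) (hp₁ : 1 ≤ p₁) (hK₀ : 1 ≤ K₀) (hK₁ : 1 ≤ K₁)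
    (hθ : 0 < θ) (hθ1 : θ < 1) (hp : 1 / p = (1 - θ) / p₀ + θ / p₁)
    (hE : PConvexOn E.carrier E.norm p₀ K₀) (hF : PConvexOn F.carrier F.norm p₁ K₁) :
    PConvexOn (caldSet (1 - θ) E F) (caldNorm (1 - θ) E F) p (K₀ ^ (1 - θ) * K₁ ^ θ) := by
  have hp₀' : 0 < p₀ := by linarith
  have hp₁' : 0 < p₁ := by linarith
  have hK₀' : 0 ≤ K₀ := by linarith
  have hK₁' : 0 ≤ K₁ := by linarith
  have hp_pos := Real.pos_of_one_div_eq_interp hp₀' hp₁' hθ hθ1 hp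
  intro n z hz
  choose lam hlam using hz
  refine ⟨(pSum_mem_caldSet_and_caldNorm_le hp₀' hp₁' hK₀' hK₁' hθ hθ1 hp hE hF hlam).1, ?_⟩
  have happrox : ∀ ε > 0, caldNorm (1 - θ) E F (pSum p z) ≤
      K₀ ^ (1 - θ) * K₁ ^ θ * (∑ k, (caldNorm (1 - θ) E F (z k) + ε) ^ p) ^ (1 / p) := by
    intro ε hε
    choose lam' hlam' hlt using fun k => exists_mem_caldAdmissible_lt ⟨lam k, hlam k⟩ hε
    refine (pSum_mem_caldSet_and_caldNorm_le hp₀' hp₁' hK₀' hK₁' hθ hθ1 hp hE hF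
      hlam').2.trans ?_
    have hlam'_pos : ∀ k, 0 ≤ lam' k := fun k => (hlam' k).1.le
    gcongr with k
    · exact sum_nonneg fun k _ => Real.rpow_nonneg (hlam'_pos k) p
    · exact hlam'_pos k
    · exact (hlt k).le
  refine (le_of_forall_pos_le_of_continuousAt ?_ happrox).trans_eq (by simp only [add_zero])
  fun_prop (disch := exact Or.inr (by positivity))
end
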